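/- A connected graph G with no isolated vertices is γ_tR-edge-removal-supercritical if and only if G is either a nontrivial star K_{1,n} (n ≥ 1), or a double star in which each of the two non-pendant vertices has degree at least 3. -/

import Mathlib

open SimpleGraph Finset

variable {V : Type*}

/-- `S` is a dominating set of `G`. -/
def Dominating (G : SimpleGraph V) (S : Finset V) : Prop :=
  ∀ v, v ∉ S → ∃ u ∈ S, G.Adj u v

/-- `S` is a total dominating set of `G`. -/
def TotalDominating (G : SimpleGraph V) (S : Finset V) : Prop :=
  ∀ v : V, ∃ u ∈ S, G.Adj u v

/-- The domination number γ(G). -/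
noncomputable def gamma (G : SimpleGraph V) [Fintype V] : ℕ :=
  sInf {n | ∃ S : Finset V, Dominating G S ∧ S.card = n}

/-- The total domination number γ_t(G). -/
noncomputable def gammaT (G : SimpleGraph V) [Fintype V] : ℕ :=
  sInf {n | ∃ S : Finset V, TotalDominating G S ∧ S.card = n}

/-- `f` is a total Roman dominating function on `G`. -/
def IsTRDF (G : SimpleGraph V) (f : V → ℕ) : Prop :=
  (∀ v, f v ≤ 2) ∧ (∀ v, f v = 0 → ∃ u, G.Adj u v ∧ f u = 2) ∧
    (∀ v, 0 < f v → ∃ u, G.Adj u v ∧ 0 < f u)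

/-- The total Roman domination number γ_tR(G). -/
noncomputable def gammaTR (G : SimpleGraph V) [Fintype V] : ℕ :=
  sInf {n | ∃ f : V → ℕ, IsTRDF G f ∧ ∑ v, f v = n}

/-- The graph `G + uv`. -/
def addEdge (G : SimpleGraph V) (u v : V) : SimpleGraph V :=
  G ⊔ SimpleGraph.fromEdgeSet {s(u, v)}

/-- The graph `G - uv`. -/
def deleteEdge (G : SimpleGraph V) (u v : V) : SimpleGraph V :=
  G.deleteEdges {s(u, v)}

/-- `G` has no isolated vertices. -/
def NoIsolated (G : SimpleGraph V) : Prop := ∀ v : V, ∃ u, G.Adj u v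

/-- The degree of `v` in `G`. -/
noncomputable def degreeN (G : SimpleGraph V) (v : V) : ℕ :=
  {u | G.Adj v u}.ncard

/-!
Fix a minimum total Roman dominating function `f` of `G`. If an edge `uv` between two non-leaves
is critical, then neither `f` nor any function of weight `γ_tR(G) + 1` obtained from `f` by raising
one `0` to `1` is a TRDF of `G - uv`. Playing these two facts against each other shows that both
ends of such an edge are positive under `f` and have no other positive neighbour; hence all their
other neighbours are leaves of value `0`, and connectivity makes `G` a double star on `c, d` with
`f = 2` exactly on the centres. If `deg c = 2`, with leaf `x` of `c` and leaf `y` of `d`, then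
`c, x, y ↦ 1`, `d ↦ 2` has weight `5 = γ_tR(G) + 1` and is a TRDF of `G - cd`.

Conversely, in a double star with both centres of degree at least 3, giving both centres the value
2 shows `γ_tR(G) ≤ 4`, while in `G - cd` each of the two stars carries weight at least 3.
-/

section Degree

variable {G : SimpleGraph V} {a b u v w : V}

lemma deleteEdge_adj :
    (deleteEdge G u v).Adj a b ↔ G.Adj a b ∧ ¬(a = u ∧ b = v) ∧ ¬(a = v ∧ b = u) := by
  simp only [deleteEdge, deleteEdges_adj, Set.mem_singleton_iff, Sym2.eq_iff]
  tauto

lemma deleteEdge_comm : deleteEdge G u v = deleteEdge G v u := by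
  ext a b
  simp only [deleteEdge_adj]
  tauto

lemma deleteEdge_adj_left (h : G.Adj w u) (hw : w ≠ v) : (deleteEdge G u v).Adj w u :=
  deleteEdge_adj.mpr ⟨h, fun h' => h.ne h'.1, fun h' => hw h'.1⟩

lemma deleteEdge_adj_right (h : G.Adj w v) (hw : w ≠ u) : (deleteEdge G u v).Adj w v :=
  deleteEdge_adj.mpr ⟨h, fun h' => hw h'.1, fun h' => h.ne h'.1⟩

lemma deleteEdge_adj_iff_of_ne (hu : w ≠ u) (hv : w ≠ v) {a : V} :
    (deleteEdge G u v).Adj a w ↔ G.Adj a w := by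
  simp only [deleteEdge_adj]
  tauto

lemma degreeN_eq_one_iff : degreeN G v = 1 ↔ ∃ u, ∀ w, G.Adj v w ↔ w = u := by
  simp [degreeN, Set.ncard_eq_one, Set.ext_iff]

lemma eq_of_degreeN_eq_one (hv : degreeN G v = 1) (hu : G.Adj v u) (hw : G.Adj v w) : w = u := by
  obtain ⟨x, hx⟩ := degreeN_eq_one_iff.mp hv
  rw [(hx w).mp hw, (hx u).mp hu]

variable [Finite V]

lemma one_le_degreeN (h : G.Adj v u) : 1 ≤ degreeN G v :=
  (Set.ncard_pos (Set.toFinite _)).mpr ⟨u, h⟩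

lemma two_le_degreeN_of_adj_of_ne_one (hu : G.Adj v u) (h : degreeN G v ≠ 1) :
    2 ≤ degreeN G v := by
  have := one_le_degreeN hu
  omega

lemma exists_adj_ne_of_two_le_degreeN (h : 2 ≤ degreeN G v) (u : V) :
    ∃ w, G.Adj v w ∧ w ≠ u := by
  obtain ⟨a, b, ha, hb, hab⟩ := (Set.one_lt_ncard_iff (Set.toFinite _)).mp h
  by_cases hau : a = u
  · exact ⟨b, hb, fun hbu => hab (hau.trans hbu.symm)⟩
  · exact ⟨a, ha, hau⟩

lemma exists_adj_adj_ne_of_three_le_degreeN (h : 3 ≤ degreeN G v) (u : V) :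
    ∃ a b, G.Adj v a ∧ G.Adj v b ∧ a ≠ b ∧ a ≠ u ∧ b ≠ u := by
  obtain ⟨a, b, c, ha, hb, hc, hab, hac, hbc⟩ := (Set.two_lt_ncard_iff (Set.toFinite _)).mp h
  by_cases hau : a = u
  · exact ⟨b, c, hb, hc, hbc, fun h => hab (hau.trans h.symm), fun h => hac (hau.trans h.symm)⟩
  by_cases hbu : b = u
  · exact ⟨a, c, ha, hc, hac, hau, fun h => hbc (hbu.trans h.symm)⟩
  · exact ⟨a, b, ha, hb, hab, hau, hbu⟩

lemma eq_or_eq_of_degreeN_eq_two (h : degreeN G v = 2) (ha : G.Adj v a) (hb : G.Adj v b)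
    (hab : a ≠ b) (hw : G.Adj v w) : w = a ∨ w = b := by
  by_contra! hne
  have : 2 < degreeN G v :=
    (Set.two_lt_ncard_iff (Set.toFinite _)).mpr ⟨a, b, w, ha, hb, hw, hab, hne.1.symm, hne.2.symm⟩
  omega

end Degree

lemma SimpleGraph.Connected.mem_of_adj_closed {G : SimpleGraph V} (hconn : G.Connected)
    {S : Set V} {c : V} (hc : c ∈ S) (hS : ∀ a ∈ S, ∀ b, G.Adj a b → b ∈ S) (v : V) : v ∈ S := by
  obtain ⟨p⟩ := hconn.preconnected c v
  induction p with
  | nil => exact hc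
  | cons h _ ih => exact ih (hS _ hc _ h)

section TotalRoman

variable {G H : SimpleGraph V} {f g : V → ℕ} {u v w x z : V}

def TRDFAt (H : SimpleGraph V) (f : V → ℕ) (z : V) : Prop :=
  (f z = 0 → ∃ w, H.Adj w z ∧ f w = 2) ∧ (0 < f z → ∃ w, H.Adj w z ∧ 0 < f w)

lemma isTRDF_iff : IsTRDF H f ↔ (∀ v, f v ≤ 2) ∧ ∀ z, TRDFAt H f z := by
  simp only [IsTRDF, TRDFAt, forall_and]

lemma IsTRDF.trdfAt (hf : IsTRDF H f) (z : V) : TRDFAt H f z :=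
  (isTRDF_iff.mp hf).2 z

lemma TRDFAt.of_eq_zero (hz : f z = 0) (hw : H.Adj w z) (h2 : f w = 2) : TRDFAt H f z :=
  ⟨fun _ => ⟨w, hw, h2⟩, fun h => absurd hz h.ne'⟩

lemma TRDFAt.of_pos (hz : 0 < f z) (hw : H.Adj w z) (hpos : 0 < f w) : TRDFAt H f z :=
  ⟨fun h => absurd h hz.ne', fun _ => ⟨w, hw, hpos⟩⟩

lemma TRDFAt.mono (hz : TRDFAt G f z) (hadj : ∀ w, G.Adj w z → H.Adj w z) (hgz : g z = f z)
    (h2 : ∀ w, f w = 2 → g w = 2) (hpos : ∀ w, 0 < f w → 0 < g w) : TRDFAt H g z := by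
  refine ⟨fun h0 => ?_, fun h0 => ?_⟩
  · obtain ⟨w, hw, hw2⟩ := hz.1 (hgz ▸ h0)
    exact ⟨w, hadj w hw, h2 w hw2⟩
  · obtain ⟨w, hw, hwpos⟩ := hz.2 (hgz ▸ h0)
    exact ⟨w, hadj w hw, hpos w hwpos⟩

lemma update_one_pos_of_pos [DecidableEq V] (hw : 0 < f w) : 0 < Function.update f x 1 w := by
  rw [Function.update_apply]
  split_ifs <;> omega

lemma update_one_eq_two [DecidableEq V] (hx : f x = 0) (hw : f w = 2) :
    Function.update f x 1 w = 2 := by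
  rw [Function.update_apply, if_neg (by rintro rfl; omega)]
  exact hw

lemma isTRDF_deleteEdge (hf : IsTRDF G f) (hu : TRDFAt (deleteEdge G u v) f u)
    (hv : TRDFAt (deleteEdge G u v) f v) : IsTRDF (deleteEdge G u v) f := by
  refine isTRDF_iff.mpr ⟨hf.1, fun z => ?_⟩
  by_cases hzu : z = u
  · exact hzu ▸ hu
  by_cases hzv : z = v
  · exact hzv ▸ hv
  exact (hf.trdfAt z).mono (fun w => (deleteEdge_adj_iff_of_ne hzu hzv).mpr) rfl
    (fun _ => id) (fun _ => id)

lemma isTRDF_deleteEdge_update [DecidableEq V] (hf : IsTRDF G f) (hx : f x = 0)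
    (hu : TRDFAt (deleteEdge G u v) (Function.update f x 1) u)
    (hv : TRDFAt (deleteEdge G u v) (Function.update f x 1) v)
    (hx' : TRDFAt (deleteEdge G u v) (Function.update f x 1) x) :
    IsTRDF (deleteEdge G u v) (Function.update f x 1) := by
  refine isTRDF_iff.mpr ⟨fun z => ?_, fun z => ?_⟩
  · rw [Function.update_apply]
    split_ifs
    exacts [by norm_num, hf.1 z]
  by_cases hzu : z = u
  · exact hzu ▸ hu
  by_cases hzv : z = v
  · exact hzv ▸ hv
  by_cases hzx : z = x
  · exact hzx ▸ hx'
  exact (hf.trdfAt z).mono (fun w => (deleteEdge_adj_iff_of_ne hzu hzv).mpr)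
    (Function.update_of_ne hzx _ _) (fun _ => update_one_eq_two hx)
    (fun _ => update_one_pos_of_pos)

lemma sum_update_add [Fintype V] [DecidableEq V] (f : V → ℕ) (x : V) (b : ℕ) :
    ∑ v, Function.update f x b v + f x = ∑ v, f v + b := by
  rw [Finset.sum_update_of_mem (mem_univ x), Finset.sum_eq_add_sum_sdiff_singleton_of_mem
    (mem_univ x) f]
  ring

lemma isTRDF_two (hiso : NoIsolated H) : IsTRDF H (fun _ => 2) :=
  ⟨fun _ => le_rfl, fun _ h => absurd h two_ne_zero,
    fun v _ => (hiso v).imp fun _ hu => ⟨hu, two_pos⟩⟩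

variable [Fintype V]

lemma gammaTR_le (hf : IsTRDF H f) : gammaTR H ≤ ∑ v, f v :=
  Nat.sInf_le ⟨f, hf, rfl⟩

lemma exists_isTRDF_sum_eq_gammaTR (hiso : NoIsolated H) :
    ∃ f, IsTRDF H f ∧ ∑ v, f v = gammaTR H :=
  Nat.sInf_mem (s := {n | ∃ f, IsTRDF H f ∧ ∑ v, f v = n}) ⟨_, fun _ => 2, isTRDF_two hiso, rfl⟩

lemma le_gammaTR {k : ℕ} (hiso : NoIsolated H) (h : ∀ f, IsTRDF H f → k ≤ ∑ v, f v) :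
    k ≤ gammaTR H := by
  obtain ⟨f, hf, hsum⟩ := exists_isTRDF_sum_eq_gammaTR hiso
  exact hsum ▸ h f hf

lemma gammaTR_le_two_mul_card [DecidableEq V] {S : Finset V} (hS : TotalDominating H S) :
    gammaTR H ≤ 2 * #S := by
  have hF : IsTRDF H (fun z => if z ∈ S then 2 else 0) := by
    refine isTRDF_iff.mpr ⟨fun z => by split_ifs <;> norm_num, fun z => ?_⟩
    obtain ⟨u, huS, hu⟩ := hS z
    by_cases hz : z ∈ S
    · exact .of_pos (by simp [hz]) hu (by simp [huS])
    · exact .of_eq_zero (by simp [hz]) hu (by simp [huS])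
  calc gammaTR H ≤ _ := gammaTR_le hF
    _ = 2 * #S := by rw [Finset.sum_ite_mem, univ_inter, sum_const, smul_eq_mul, mul_comm]

end TotalRoman

section MinimumTRDF

variable {G : SimpleGraph V} {f : V → ℕ} {a u v : V}

lemma IsTRDF.eq_two_of_degreeN_eq_one (hf : IsTRDF G f) (ha : degreeN G a = 1)
    (hab : G.Adj a u) (ha0 : f a = 0) : f u = 2 := by
  obtain ⟨w, hw, hw2⟩ := hf.2.1 a ha0
  rwa [← eq_of_degreeN_eq_one ha hab hw.symm]

variable [Fintype V]

lemma false_of_eq_zero_of_eq_zero (hf : IsTRDF G f) (hmin : ∑ w, f w = gammaTR G)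
    (hcrit : gammaTR G + 2 ≤ gammaTR (deleteEdge G u v)) (hu : f u = 0) (hv : f v = 0) :
    False := by
  obtain ⟨w, hw, hw2⟩ := hf.2.1 u hu
  obtain ⟨t, ht, ht2⟩ := hf.2.1 v hv
  have hg := isTRDF_deleteEdge hf
    (.of_eq_zero hu (deleteEdge_adj_left hw (by rintro rfl; omega)) hw2)
    (.of_eq_zero hv (deleteEdge_adj_right ht (by rintro rfl; omega)) ht2)
  have := hcrit.trans (gammaTR_le hg)
  omega

lemma eq_two_and_eq_zero_of_eq_zero_of_pos (hf : IsTRDF G f) (hmin : ∑ w, f w = gammaTR G)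
    (hcrit : gammaTR G + 2 ≤ gammaTR (deleteEdge G u v)) (hu : f u = 0) (hv : 0 < f v) :
    f v = 2 ∧ ∀ x, G.Adj x u → x ≠ v → f x = 0 := by
  classical
  obtain ⟨t, ht, htpos⟩ := hf.2.2 v hv
  have htu : t ≠ u := by rintro rfl; omega
  obtain ⟨w, hw, hw2⟩ := hf.2.1 u hu
  have hwv : w = v := by
    by_contra hwv
    have hg := isTRDF_deleteEdge hf (.of_eq_zero hu (deleteEdge_adj_left hw hwv) hw2)
      (.of_pos hv (deleteEdge_adj_right ht htu) htpos)
    have := hcrit.trans (gammaTR_le hg)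
    omega
  refine ⟨hwv ▸ hw2, fun x hx hxv => Nat.eq_zero_of_not_pos fun hxpos => ?_⟩
  -- raising `u` to 1 repairs the only condition that `G - uv` breaks
  have hxu : x ≠ u := hx.ne
  have hvu : v ≠ u := by rintro rfl; omega
  have hu' : TRDFAt (deleteEdge G u v) (Function.update f u 1) u :=
    .of_pos (by simp) (deleteEdge_adj_left hx hxv) (by simpa [hxu] using hxpos)
  have hg := isTRDF_deleteEdge_update hf hu hu'
    (.of_pos (by simpa [hvu] using hv) (deleteEdge_adj_right ht htu) (by simpa [htu] using htpos))
    hu'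
  have := hcrit.trans (gammaTR_le hg)
  have := sum_update_add f u 1
  omega

lemma false_of_pos_of_pos (hf : IsTRDF G f) (hmin : ∑ w, f w = gammaTR G)
    (hcrit : gammaTR G + 2 ≤ gammaTR (deleteEdge G u v)) (hdv : 2 ≤ degreeN G v)
    (hu : 0 < f u) (hv : 0 < f v) (ha : G.Adj a u) (hav : a ≠ v) (hapos : 0 < f a) : False := by
  classical
  by_cases hb : ∃ b, G.Adj b v ∧ b ≠ u ∧ 0 < f b
  · obtain ⟨b, hb, hbu, hbpos⟩ := hb
    have hg := isTRDF_deleteEdge hf (.of_pos hu (deleteEdge_adj_left ha hav) hapos)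
      (.of_pos hv (deleteEdge_adj_right hb hbu) hbpos)
    have := hcrit.trans (gammaTR_le hg)
    omega
  push Not at hb
  -- otherwise `v` has a neighbour `x ≠ u` of value 0, and raising it to 1 repairs `v`
  obtain ⟨x, hvx, hxu⟩ := exists_adj_ne_of_two_le_degreeN hdv u
  have hx0 : f x = 0 := Nat.le_zero.mp (hb x hvx.symm hxu)
  have hxv : x ≠ v := hvx.ne'
  have hux : u ≠ x := by rintro rfl; omega
  have hg := isTRDF_deleteEdge_update hf hx0
    (.of_pos (by simpa [hux] using hu) (deleteEdge_adj_left ha hav) (update_one_pos_of_pos hapos))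
    (.of_pos (by simpa [hxv.symm] using hv) (deleteEdge_adj_right hvx.symm hxu) (by simp))
    (.of_pos (by simp) ((deleteEdge_adj_iff_of_ne hxu hxv).mpr hvx) (update_one_pos_of_pos hv))
  have := hcrit.trans (gammaTR_le hg)
  have := sum_update_add f x 1
  omega

end MinimumTRDF

/-- Pendant edges are exempt: in the paper `γ_tR(G - e) = ∞` for them. -/
def Supercritical (G : SimpleGraph V) [Fintype V] : Prop :=
  ∀ u v : V, G.Adj u v →
    degreeN G u = 1 ∨ degreeN G v = 1 ∨ gammaTR G + 2 ≤ gammaTR (deleteEdge G u v)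

namespace Supercritical

variable [Fintype V] {G : SimpleGraph V} {f : V → ℕ} {a b c d u v x : V}

lemma gammaTR_add_two_le (hsc : Supercritical G) (huv : G.Adj u v) (hu : degreeN G u ≠ 1)
    (hv : degreeN G v ≠ 1) : gammaTR G + 2 ≤ gammaTR (deleteEdge G u v) :=
  ((hsc u v huv).resolve_left hu).resolve_left hv

lemma false_of_adj_of_eq_zero (hsc : Supercritical G) (hf : IsTRDF G f)
    (hmin : ∑ w, f w = gammaTR G) (hab : G.Adj a b) (ha : f a = 0) (hb : f b = 0) : False := by
  rcases hsc a b hab with ha1 | hb1 | hcrit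
  · exact absurd (hf.eq_two_of_degreeN_eq_one ha1 hab ha) (by omega)
  · exact absurd (hf.eq_two_of_degreeN_eq_one hb1 hab.symm hb) (by omega)
  · exact false_of_eq_zero_of_eq_zero hf hmin hcrit ha hb

lemma pos_of_adj (hsc : Supercritical G) (hf : IsTRDF G f) (hmin : ∑ w, f w = gammaTR G)
    (huv : G.Adj u v) (hu : degreeN G u ≠ 1) (hv : degreeN G v ≠ 1) : 0 < f u := by
  have hcrit := hsc.gammaTR_add_two_le huv hu hv
  refine Nat.pos_of_ne_zero fun hu0 => ?_
  rcases Nat.eq_zero_or_pos (f v) with hv0 | hvpos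
  · exact false_of_eq_zero_of_eq_zero hf hmin hcrit hu0 hv0
  obtain ⟨x, hux, hxv⟩ :=
    exists_adj_ne_of_two_le_degreeN (two_le_degreeN_of_adj_of_ne_one huv hu) v
  have hx0 := (eq_two_and_eq_zero_of_eq_zero_of_pos hf hmin hcrit hu0 hvpos).2 x hux.symm hxv
  exact hsc.false_of_adj_of_eq_zero hf hmin hux hu0 hx0

lemma eq_of_adj_of_pos (hsc : Supercritical G) (hf : IsTRDF G f) (hmin : ∑ w, f w = gammaTR G)
    (huv : G.Adj u v) (hu : degreeN G u ≠ 1) (hv : degreeN G v ≠ 1) (hx : G.Adj x u)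
    (hxpos : 0 < f x) : x = v := by
  by_contra hxv
  exact false_of_pos_of_pos hf hmin (hsc.gammaTR_add_two_le huv hu hv)
    (two_le_degreeN_of_adj_of_ne_one huv.symm hv) (hsc.pos_of_adj hf hmin huv hu hv)
    (hsc.pos_of_adj hf hmin huv.symm hv hu) hx hxv hxpos

lemma degreeN_eq_one_and_eq_zero (hsc : Supercritical G) (hf : IsTRDF G f)
    (hmin : ∑ w, f w = gammaTR G) (huv : G.Adj u v) (hu : degreeN G u ≠ 1)
    (hv : degreeN G v ≠ 1) (hux : G.Adj u x) (hxv : x ≠ v) : degreeN G x = 1 ∧ f x = 0 := by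
  have hx0 : f x = 0 :=
    Nat.eq_zero_of_not_pos fun hxpos => hxv (hsc.eq_of_adj_of_pos hf hmin huv hu hv hux.symm hxpos)
  refine ⟨?_, hx0⟩
  by_contra hx
  have := hsc.pos_of_adj hf hmin hux.symm hx hu
  omega

lemma isDoubleStar_of_adj (hsc : Supercritical G) (hconn : G.Connected) (hf : IsTRDF G f)
    (hmin : ∑ w, f w = gammaTR G) (hcd : G.Adj c d) (hc : degreeN G c ≠ 1)
    (hd : degreeN G d ≠ 1) :
    ∀ v, v ≠ c → v ≠ d → degreeN G v = 1 ∧ (G.Adj c v ∨ G.Adj d v) ∧ f v = 0 := by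
  have hleaf_c {x} (hcx : G.Adj c x) (hxd : x ≠ d) :=
    hsc.degreeN_eq_one_and_eq_zero hf hmin hcd hc hd hcx hxd
  have hleaf_d {x} (hdx : G.Adj d x) (hxc : x ≠ c) :=
    hsc.degreeN_eq_one_and_eq_zero hf hmin hcd.symm hd hc hdx hxc
  have hcover := hconn.mem_of_adj_closed (S := {v | v = c ∨ v = d ∨ G.Adj c v ∨ G.Adj d v})
    (Or.inl rfl) <| by
      rintro a (rfl | rfl | hca | hda) b hab
      · exact Or.inr (Or.inr (Or.inl hab))
      · exact Or.inr (Or.inr (Or.inr hab))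
      · by_cases had : a = d
        · exact Or.inr (Or.inr (Or.inr (had ▸ hab)))
        · exact Or.inl (eq_of_degreeN_eq_one (hleaf_c hca had).1 hca.symm hab)
      · by_cases hac : a = c
        · exact Or.inr (Or.inr (Or.inl (hac ▸ hab)))
        · exact Or.inr (Or.inl (eq_of_degreeN_eq_one (hleaf_d hda hac).1 hda.symm hab))
  intro v hvc hvd
  rcases hcover v with rfl | rfl | hcv | hdv
  · exact absurd rfl hvc
  · exact absurd rfl hvd
  · exact ⟨(hleaf_c hcv hvd).1, Or.inl hcv, (hleaf_c hcv hvd).2⟩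
  · exact ⟨(hleaf_d hdv hvc).1, Or.inr hdv, (hleaf_d hdv hvc).2⟩

lemma isTRDF_deleteEdge_of_degreeN_eq_two {g : V → ℕ} {y : V} (hcd : G.Adj c d)
    (hc2 : degreeN G c = 2) (hcx : G.Adj c x) (hxd : x ≠ d) (hdy : G.Adj d y) (hyc : y ≠ c)
    (hcover : ∀ v, v ≠ c → v ≠ d → G.Adj c v ∨ G.Adj d v) (hg2 : ∀ z, g z ≤ 2)
    (hgc : g c = 1) (hgd : g d = 2) (hgx : g x = 1) (hgy : g y = 1)
    (hg0 : ∀ z, z ≠ c → z ≠ d → z ≠ x → z ≠ y → g z = 0) : IsTRDF (deleteEdge G c d) g := by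
  have hxc : x ≠ c := hcx.ne'
  have hyd : y ≠ d := hdy.ne'
  refine isTRDF_iff.mpr ⟨hg2, fun z => ?_⟩
  by_cases hzc : z = c
  · rw [hzc]
    exact .of_pos (by omega) (deleteEdge_adj_left hcx.symm hxd) (by omega)
  by_cases hzd : z = d
  · rw [hzd]
    exact .of_pos (by omega) (deleteEdge_adj_right hdy.symm hyc) (by omega)
  by_cases hzx : z = x
  · rw [hzx]
    exact .of_pos (by omega) ((deleteEdge_adj_iff_of_ne hxc hxd).mpr hcx) (by omega)
  by_cases hzy : z = y
  · rw [hzy]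
    exact .of_pos (by omega) ((deleteEdge_adj_iff_of_ne hyc hyd).mpr hdy) (by omega)
  rcases hcover z hzc hzd with hcz | hdz
  · rcases eq_or_eq_of_degreeN_eq_two hc2 hcd hcx hxd.symm hcz with rfl | rfl <;> contradiction
  · exact .of_eq_zero (hg0 z hzc hzd hzx hzy) ((deleteEdge_adj_iff_of_ne hzc hzd).mpr hdz) hgd

lemma three_le_degreeN (hsc : Supercritical G) (hconn : G.Connected) (hiso : NoIsolated G)
    (hcd : G.Adj c d) (hc : degreeN G c ≠ 1) (hd : degreeN G d ≠ 1) : 3 ≤ degreeN G c := by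
  classical
  obtain ⟨f, hf, hmin⟩ := exists_isTRDF_sum_eq_gammaTR hiso
  have hleaf := hsc.isDoubleStar_of_adj hconn hf hmin hcd hc hd
  by_contra! h3
  have hc2 : degreeN G c = 2 := by have := two_le_degreeN_of_adj_of_ne_one hcd hc; omega
  obtain ⟨x, hcx, hxd⟩ := exists_adj_ne_of_two_le_degreeN hc2.ge d
  obtain ⟨y, hdy, hyc⟩ :=
    exists_adj_ne_of_two_le_degreeN (two_le_degreeN_of_adj_of_ne_one hcd.symm hd) c
  have hxc : x ≠ c := hcx.ne'
  have hyd : y ≠ d := hdy.ne'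
  obtain ⟨hx1, -, hx0⟩ := hleaf x hxc hxd
  obtain ⟨hy1, -, hy0⟩ := hleaf y hyc hyd
  have hxy : x ≠ y := by
    rintro rfl
    exact hcd.ne (eq_of_degreeN_eq_one hx1 hcx.symm hdy.symm).symm
  have hfc : f c = 2 := hf.eq_two_of_degreeN_eq_one hx1 hcx.symm hx0
  have hfd : f d = 2 := hf.eq_two_of_degreeN_eq_one hy1 hdy.symm hy0
  -- `f` is 2 on `c`, `d` and 0 elsewhere: lowering `c` to 1 and raising `x`, `y` to 1
  -- costs only 1 more
  set g := Function.update (Function.update (Function.update f c 1) x 1) y 1 with hg_def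
  have hg : IsTRDF (deleteEdge G c d) g := by
    refine isTRDF_deleteEdge_of_degreeN_eq_two hcd hc2 hcx hxd hdy hyc
      (fun v hvc hvd => (hleaf v hvc hvd).2.1) (fun z => ?_) (by simp [g, hxc.symm, hyc.symm])
      (by simp [g, hxd.symm, hyd.symm, hcd.ne.symm, hfd]) (by simp [g, hxy]) (by simp [g])
      (fun z hzc hzd hzx hzy => by simp [g, hzc, hzx, hzy, (hleaf z hzc hzd).2.2])
    simp only [g, Function.update_apply]
    split_ifs <;> first | omega | exact hf.1 z
  have hsum : ∑ w, g w = gammaTR G + 1 := by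
    have h1 := sum_update_add f c 1
    have h2 := sum_update_add (Function.update f c 1) x 1
    have h3 := sum_update_add (Function.update (Function.update f c 1) x 1) y 1
    rw [Function.update_of_ne hxc] at h2
    rw [Function.update_of_ne hxy.symm, Function.update_of_ne hyc] at h3
    rw [hg_def]
    omega
  have := (hsc.gammaTR_add_two_le hcd hc hd).trans (gammaTR_le hg)
  omega

end Supercritical

section Structure

variable {G : SimpleGraph V} {c d p q : V}

lemma isStar_of_forall_adj_degreeN_eq_one (hconn : G.Connected) (hpq : G.Adj p q)
    (hleaf : ∀ x, G.Adj p x → degreeN G x = 1) :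
    (∃ v, v ≠ p) ∧ ∀ v, v ≠ p → G.Adj p v ∧ degreeN G v = 1 := by
  have hcover := hconn.mem_of_adj_closed (S := {v | v = p ∨ G.Adj p v}) (Or.inl rfl) <| by
    rintro a (rfl | hpa) b hab
    · exact Or.inr hab
    · exact Or.inl (eq_of_degreeN_eq_one (hleaf a hpa) hpa.symm hab)
  refine ⟨⟨q, hpq.ne'⟩, fun v hvp => ?_⟩
  obtain rfl | hpv := hcover v
  · exact absurd rfl hvp
  · exact ⟨hpv, hleaf v hpv⟩

lemma exists_isStar (hconn : G.Connected) (hiso : NoIsolated G)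
    (hleaf : ∀ c d, G.Adj c d → degreeN G c ≠ 1 → degreeN G d = 1) :
    ∃ c, (∃ v, v ≠ c) ∧ ∀ v, v ≠ c → G.Adj c v ∧ degreeN G v = 1 := by
  obtain ⟨p⟩ := hconn.nonempty
  obtain ⟨q, hqp⟩ := hiso p
  by_cases hp : degreeN G p = 1
  · by_cases hq : degreeN G q = 1
    · refine ⟨p, isStar_of_forall_adj_degreeN_eq_one hconn hqp.symm fun x hpx => ?_⟩
      rwa [eq_of_degreeN_eq_one hp hqp.symm hpx]
    · exact ⟨q, isStar_of_forall_adj_degreeN_eq_one hconn hqp fun x hqx => hleaf q x hqx hq⟩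
  · exact ⟨p, isStar_of_forall_adj_degreeN_eq_one hconn hqp.symm fun x hpx => hleaf p x hpx hp⟩

lemma add_le_sum_of_mem {S : Finset V} {a b : V} (g : V → ℕ) (hab : a ≠ b) (ha : a ∈ S)
    (hb : b ∈ S) : g a + g b ≤ ∑ v ∈ S, g v := by
  classical
  calc g a + g b = ∑ v ∈ {a, b}, g v := (sum_pair hab).symm
    _ ≤ ∑ v ∈ S, g v := sum_le_sum_of_subset (insert_subset ha (singleton_subset_iff.mpr hb))

lemma add_add_le_sum_of_mem {S : Finset V} {a b c : V} (g : V → ℕ) (hab : a ≠ b) (hac : a ≠ c)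
    (hbc : b ≠ c) (ha : a ∈ S) (hb : b ∈ S) (hc : c ∈ S) : g a + g b + g c ≤ ∑ v ∈ S, g v := by
  classical
  calc g a + g b + g c = ∑ v ∈ {a, b, c}, g v := by
        rw [sum_insert (by simp [hab, hac]), sum_pair hbc, add_assoc]
    _ ≤ ∑ v ∈ S, g v :=
        sum_le_sum_of_subset (insert_subset ha (insert_subset hb (singleton_subset_iff.mpr hc)))

lemma three_le_sum_of_pendant {H : SimpleGraph V} {g : V → ℕ} {x₁ x₂ : V} (hg : IsTRDF H g)
    {S : Finset V} (hc : c ∈ S) (hx₁ : x₁ ∈ S) (hx₂ : x₂ ∈ S) (h12 : x₁ ≠ x₂)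
    (hcx₁ : H.Adj c x₁) (hcx₂ : H.Adj c x₂) (hN₁ : ∀ w, H.Adj w x₁ → w = c)
    (hN₂ : ∀ w, H.Adj w x₂ → w = c) (hNc : ∀ w, H.Adj w c → w ∈ S) : 3 ≤ ∑ v ∈ S, g v := by
  have hpendant_zero {x} (hN : ∀ w, H.Adj w x → w = c) (hx0 : g x = 0) : 3 ≤ ∑ v ∈ S, g v := by
    obtain ⟨w, hw, hw2⟩ := hg.2.1 x hx0
    rw [hN w hw] at hw2
    obtain ⟨t, ht, htpos⟩ := hg.2.2 c (by omega)
    have := add_le_sum_of_mem g ht.ne' hc (hNc t ht)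
    omega
  rcases Nat.eq_zero_or_pos (g x₁) with h₁ | h₁
  · exact hpendant_zero hN₁ h₁
  rcases Nat.eq_zero_or_pos (g x₂) with h₂ | h₂
  · exact hpendant_zero hN₂ h₂
  have hsum₁₂ := add_le_sum_of_mem g h12 hx₁ hx₂
  rcases Nat.eq_zero_or_pos (g c) with hc0 | hcpos
  · obtain ⟨w, hw, hw2⟩ := hg.2.1 c hc0
    by_cases hw₁ : w = x₁
    · rw [hw₁] at hw2; omega
    by_cases hw₂ : w = x₂
    · rw [hw₂] at hw2; omega
    have := add_add_le_sum_of_mem g hw₁ hw₂ h12 (hNc w hw) hx₁ hx₂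
    omega
  · have := add_add_le_sum_of_mem g h12 hcx₁.ne' hcx₂.ne' hx₁ hx₂ hc
    omega

end Structure

section DoubleStar

variable {G : SimpleGraph V} {c d : V}

lemma noIsolated_deleteEdge [Finite V] (hc : 2 ≤ degreeN G c) (hd : 2 ≤ degreeN G d)
    (hcover : ∀ v, v ≠ c → v ≠ d → G.Adj c v ∨ G.Adj d v) : NoIsolated (deleteEdge G c d) := by
  intro z
  by_cases hzc : z = c
  · obtain ⟨x, hcx, hxd⟩ := exists_adj_ne_of_two_le_degreeN hc d
    exact ⟨x, by rw [hzc]; exact deleteEdge_adj_left hcx.symm hxd⟩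
  by_cases hzd : z = d
  · obtain ⟨y, hdy, hyc⟩ := exists_adj_ne_of_two_le_degreeN hd c
    exact ⟨y, by rw [hzd]; exact deleteEdge_adj_right hdy.symm hyc⟩
  rcases hcover z hzc hzd with hcz | hdz
  · exact ⟨c, (deleteEdge_adj_iff_of_ne hzc hzd).mpr hcz⟩
  · exact ⟨d, (deleteEdge_adj_iff_of_ne hzc hzd).mpr hdz⟩

lemma three_le_sum_of_isTRDF_deleteEdge [Finite V] {g : V → ℕ}
    (hg : IsTRDF (deleteEdge G c d) g) (h3c : 3 ≤ degreeN G c)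
    (hleaf : ∀ v, v ≠ c → v ≠ d → degreeN G v = 1) {S : Finset V} (hcS : c ∈ S)
    (hS : ∀ v, G.Adj c v → v ≠ d → v ∈ S) : 3 ≤ ∑ v ∈ S, g v := by
  obtain ⟨x₁, x₂, hcx₁, hcx₂, h12, hx₁d, hx₂d⟩ := exists_adj_adj_ne_of_three_le_degreeN h3c d
  have hpendant {x} (hcx : G.Adj c x) (hxd : x ≠ d) (w : V)
      (hw : (deleteEdge G c d).Adj w x) : w = c :=
    eq_of_degreeN_eq_one (hleaf x hcx.ne' hxd) hcx.symm (deleteEdge_adj.mp hw).1.symm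
  refine three_le_sum_of_pendant hg hcS (hS _ hcx₁ hx₁d) (hS _ hcx₂ hx₂d) h12
    ((deleteEdge_adj_iff_of_ne hcx₁.ne' hx₁d).mpr hcx₁)
    ((deleteEdge_adj_iff_of_ne hcx₂.ne' hx₂d).mpr hcx₂) (hpendant hcx₁ hx₁d) (hpendant hcx₂ hx₂d)
    fun w hw => ?_
  obtain ⟨hwc, -, hwd⟩ := deleteEdge_adj.mp hw
  exact hS w hwc.symm fun h => hwd ⟨h, rfl⟩

variable [Fintype V]

lemma six_le_gammaTR_deleteEdge (hcd : G.Adj c d) (h3c : 3 ≤ degreeN G c)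
    (h3d : 3 ≤ degreeN G d)
    (hleaf : ∀ v, v ≠ c → v ≠ d → degreeN G v = 1 ∧ (G.Adj c v ∨ G.Adj d v)) :
    6 ≤ gammaTR (deleteEdge G c d) := by
  classical
  refine le_gammaTR (noIsolated_deleteEdge (by omega) (by omega) fun v hvc hvd =>
    (hleaf v hvc hvd).2) fun g hg => ?_
  let A := univ.filter fun v => v = c ∨ (G.Adj c v ∧ v ≠ d)
  let B := univ.filter fun v => v = d ∨ (G.Adj d v ∧ v ≠ c)
  have hA : 3 ≤ ∑ v ∈ A, g v :=
    three_le_sum_of_isTRDF_deleteEdge hg h3c (fun v hvc hvd => (hleaf v hvc hvd).1)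
      (by simp [A]) fun v hcv hvd => by simp [A, hcv, hvd]
  have hB : 3 ≤ ∑ v ∈ B, g v :=
    three_le_sum_of_isTRDF_deleteEdge (deleteEdge_comm (G := G) ▸ hg) h3d
      (fun v hvd hvc => (hleaf v hvc hvd).1) (by simp [B]) fun v hdv hvc => by simp [B, hdv, hvc]
  have hAB : Disjoint A B := by
    refine disjoint_filter.mpr ?_
    rintro v - (rfl | ⟨hcv, hvd⟩) (rfl | ⟨hdv, hvc⟩)
    · exact hcd.ne rfl
    · exact hvc rfl
    · exact hvd rfl
    · exact hcd.ne (eq_of_degreeN_eq_one (hleaf v hvc hvd).1 hdv.symm hcv.symm)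
  calc 6 ≤ ∑ v ∈ A ∪ B, g v := by rw [sum_union hAB]; omega
    _ ≤ ∑ v, g v := sum_le_sum_of_subset (subset_univ _)

lemma supercritical_of_isDoubleStar (hcd : G.Adj c d) (h3c : 3 ≤ degreeN G c)
    (h3d : 3 ≤ degreeN G d)
    (hleaf : ∀ v, v ≠ c → v ≠ d → degreeN G v = 1 ∧ (G.Adj c v ∨ G.Adj d v)) :
    Supercritical G := by
  classical
  have hcrit : gammaTR G + 2 ≤ gammaTR (deleteEdge G c d) := by
    have h4 : gammaTR G ≤ 2 * #{c, d} := gammaTR_le_two_mul_card fun v => by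
      by_cases hvc : v = c
      · exact ⟨d, by simp, hvc ▸ hcd.symm⟩
      by_cases hvd : v = d
      · exact ⟨c, by simp, hvd ▸ hcd⟩
      rcases (hleaf v hvc hvd).2 with h | h
      · exact ⟨c, by simp, h⟩
      · exact ⟨d, by simp, h⟩
    rw [card_pair hcd.ne] at h4
    have := six_le_gammaTR_deleteEdge hcd h3c h3d hleaf
    omega
  intro u v huv
  by_cases hu : u = c ∨ u = d
  · by_cases hv : v = c ∨ v = d
    · right; right
      rcases hu with rfl | rfl <;> rcases hv with rfl | rfl
      · exact (huv.ne rfl).elim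
      · exact hcrit
      · rwa [deleteEdge_comm]
      · exact (huv.ne rfl).elim
    · push Not at hv
      exact Or.inr (Or.inl (hleaf v hv.1 hv.2).1)
  · push Not at hu
    exact Or.inl (hleaf u hu.1 hu.2).1

lemma supercritical_of_isStar (hstar : ∀ v, v ≠ c → G.Adj c v ∧ degreeN G v = 1) :
    Supercritical G := by
  intro u v huv
  by_cases hu : u = c
  · exact Or.inr (Or.inl (hstar v fun hv => huv.ne (hu.trans hv.symm)).2)
  · exact Or.inl (hstar u hu).2

end DoubleStar

theorem stmt17 (G : SimpleGraph V) [Fintype V] (hconn : G.Connected)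
    (hiso : NoIsolated G) :
    (∀ u v : V, G.Adj u v →
        degreeN G u = 1 ∨ degreeN G v = 1 ∨ gammaTR G + 2 ≤ gammaTR (deleteEdge G u v)) ↔
      (∃ c : V, (∃ v : V, v ≠ c) ∧ ∀ v : V, v ≠ c → G.Adj c v ∧ degreeN G v = 1) ∨
        (∃ c d : V, c ≠ d ∧ G.Adj c d ∧ 3 ≤ degreeN G c ∧ 3 ≤ degreeN G d ∧
          ∀ v : V, v ≠ c → v ≠ d → degreeN G v = 1 ∧ (G.Adj c v ∨ G.Adj d v)) := by
  refine ⟨fun (hsc : Supercritical G) => ?_, ?_⟩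
  · by_cases h : ∃ c d, G.Adj c d ∧ degreeN G c ≠ 1 ∧ degreeN G d ≠ 1
    · obtain ⟨c, d, hcd, hc, hd⟩ := h
      obtain ⟨f, hf, hmin⟩ := exists_isTRDF_sum_eq_gammaTR hiso
      refine Or.inr ⟨c, d, hcd.ne, hcd, hsc.three_le_degreeN hconn hiso hcd hc hd,
        hsc.three_le_degreeN hconn hiso hcd.symm hd hc, fun v hvc hvd => ?_⟩
      exact (hsc.isDoubleStar_of_adj hconn hf hmin hcd hc hd v hvc hvd).imp_right And.left
    · push Not at h
      exact Or.inl (exists_isStar hconn hiso h)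
  · rintro (⟨c, -, hstar⟩ | ⟨c, d, -, hcd, h3c, h3d, hleaf⟩)
    · exact supercritical_of_isStar hstar
    · exact supercritical_of_isDoubleStar hcd h3c h3d hleaf
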